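/- arXiv:2108.03210 — 3 statements merged into one kernel-verified Lean document; each statement's English description precedes it below -/
import Mathlib

section
/- In a prediction space, if the predictive distribution F is auto-calibrated, then F is both marginally calibrated and probabilistically calibrated. -/
open MeasureTheory ProbabilityTheory

noncomputable section

/-- The cumulative distribution function of a measure `G` on `ℝ`, evaluated at `y`. -/
def cdfAt (G : Measure ℝ) (y : ℝ) : ℝ := (G (Set.Iic y)).toReal

/-- The left limit `G(y−)` of the CDF of `G` at `y`. -/
def cdfLt (G : Measure ℝ) (y : ℝ) : ℝ := (G (Set.Iio y)).toReal

/-- The lower `α`-quantile `q_α^-(G) = inf {x : G(x) ≥ α}`. -/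
def lowerQuantile (G : Measure ℝ) (α : ℝ) : ℝ := sInf {x : ℝ | α ≤ cdfAt G x}

/-- The upper `α`-quantile `q_α^+(G) = sup {x : G(x−) ≤ α}`. -/
def upperQuantile (G : Measure ℝ) (α : ℝ) : ℝ := sSup {x : ℝ | cdfLt G x ≤ α}

variable {Ω : Type*} [MeasurableSpace Ω]

/-- The (randomized) probability integral transform `Z_F = F(Y−) + U (F(Y) − F(Y−))`. -/
def PIT (F : Ω → Measure ℝ) (Y U : Ω → ℝ) (ω : Ω) : ℝ :=
  cdfLt (F ω) (Y ω) + U ω * (cdfAt (F ω) (Y ω) - cdfLt (F ω) (Y ω))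

/-- The uniform distribution on `[0,1]`. -/
def unif01 : Measure ℝ := volume.restrict (Set.Icc (0:ℝ) 1)

/-- A prediction space: a probability space carrying a random probability measure `F` on `ℝ`
(the predictive distribution), an outcome `Y`, and a uniform random variable `U` that is
independent of the σ-algebra generated by `F` and `Y`. -/
structure IsPredictionSpace (μ : Measure Ω) (F : Ω → Measure ℝ) (Y U : Ω → ℝ) : Prop where
  isProb : IsProbabilityMeasure μ
  probF : ∀ ω, IsProbabilityMeasure (F ω)
  measF : Measurable F
  measY : Measurable Y
  measU : Measurable U
  unifU : μ.map U = unif01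
  indepU : Indep (MeasurableSpace.comap U inferInstance)
    (MeasurableSpace.comap F inferInstance ⊔ MeasurableSpace.comap Y inferInstance) μ

/-- `F` is auto-calibrated: `F(y) = Q(Y ≤ y | σ(F))` a.s. for every `y`. -/
def AutoCalibrated (μ : Measure Ω) (F : Ω → Measure ℝ) (Y : Ω → ℝ) : Prop :=
  ∀ y : ℝ, (fun ω => cdfAt (F ω) y)
    =ᵐ[μ] μ[Set.indicator {ω | Y ω ≤ y} (fun _ => (1:ℝ)) | MeasurableSpace.comap F inferInstance]

/-- `F` is probabilistically calibrated: the PIT is uniform on `[0,1]`. -/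
def ProbCalibrated (μ : Measure Ω) (F : Ω → Measure ℝ) (Y U : Ω → ℝ) : Prop :=
  μ.map (PIT F Y U) = unif01

/-- `F` is marginally calibrated: `E[F(y)] = Q(Y ≤ y)` for every `y`. -/
def MargCalibrated (μ : Measure Ω) (F : Ω → Measure ℝ) (Y : Ω → ℝ) : Prop :=
  ∀ y : ℝ, ∫ ω, cdfAt (F ω) y ∂μ = (μ {ω | Y ω ≤ y}).toReal

/-- `F` is CEP calibrated: `Q(Z_F ≤ α | q_α^-(F)) = α` a.s. for every `α ∈ (0,1)`. -/
def CEPCalibrated (μ : Measure Ω) (F : Ω → Measure ℝ) (Y U : Ω → ℝ) : Prop :=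
  ∀ α ∈ Set.Ioo (0:ℝ) 1,
    μ[Set.indicator {ω | PIT F Y U ω ≤ α} (fun _ => (1:ℝ)) |
      MeasurableSpace.comap (fun ω => lowerQuantile (F ω) α) inferInstance]
      =ᵐ[μ] fun _ => α

/-- `F` is threshold calibrated: `Q(Y ≤ t | F(t)) = F(t)` a.s. for every `t`. -/
def ThreshCalibrated (μ : Measure Ω) (F : Ω → Measure ℝ) (Y : Ω → ℝ) : Prop :=
  ∀ t : ℝ,
    μ[Set.indicator {ω | Y ω ≤ t} (fun _ => (1:ℝ)) |
      MeasurableSpace.comap (fun ω => cdfAt (F ω) t) inferInstance]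
      =ᵐ[μ] fun ω => cdfAt (F ω) t

/-- An identification function: measurable, increasing and left-continuous in its
first argument. -/
structure IsIdentificationFunction (V : ℝ → ℝ → ℝ) : Prop where
  meas : Measurable (Function.uncurry V)
  mono : ∀ y : ℝ, Monotone fun x => V x y
  leftCont : ∀ y x : ℝ, ContinuousWithinAt (fun x => V x y) (Set.Iic x) x

/-- Lower bound `T^-(G) = sup {x : ∫ V(x,y) dG(y) < 0}` of the functional induced by `V`. -/
def Tminus (V : ℝ → ℝ → ℝ) (G : Measure ℝ) : ℝ := sSup {x : ℝ | ∫ y, V x y ∂G < 0}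

/-- Upper bound `T^+(G) = inf {x : ∫ V(x,y) dG(y) > 0}` of the functional induced by `V`. -/
def Tplus (V : ℝ → ℝ → ℝ) (G : Measure ℝ) : ℝ := sInf {x : ℝ | 0 < ∫ y, V x y ∂G}

/-- `V` is of prediction error form `V(x,y) = v(x−y)`. -/
def PredErrorForm (V : ℝ → ℝ → ℝ) : Prop :=
  ∃ v : ℝ → ℝ, Monotone v ∧ (∀ x : ℝ, ContinuousWithinAt v (Set.Iic x) x) ∧
    (∃ r : ℝ, 0 < r ∧ v (-r) < 0 ∧ 0 < v r) ∧ ∀ x y : ℝ, V x y = v (x - y)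

/-- `V` is of the form `V(x,y) = x − T(δ_y)` for a singleton-valued functional `T`. -/
def DiracSingletonForm (V : ℝ → ℝ → ℝ) : Prop :=
  (∀ y : ℝ, Tminus V (Measure.dirac y) = Tplus V (Measure.dirac y)) ∧
  ∀ x y : ℝ, V x y = x - Tminus V (Measure.dirac y)

/-- Assumption (V): `V` induces the functional on a convex class `𝓕₀ ⊇ 𝓕` of probability
measures containing all Dirac measures, and `V` is of prediction error form or of the
form `V(x,y) = x − T(δ_y)` for a singleton-valued `T`. -/
structure AssumptionV (V : ℝ → ℝ → ℝ) (𝓕 : Set (Measure ℝ)) : Prop where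
  inducing : ∃ 𝓕₀ : Set (Measure ℝ), 𝓕 ⊆ 𝓕₀ ∧ (∀ G ∈ 𝓕₀, IsProbabilityMeasure G) ∧
    (∀ y : ℝ, Measure.dirac y ∈ 𝓕₀) ∧
    (∀ G₁ ∈ 𝓕₀, ∀ G₂ ∈ 𝓕₀, ∀ p : ℝ, 0 ≤ p → p ≤ 1 →
      ENNReal.ofReal p • G₁ + ENNReal.ofReal (1 - p) • G₂ ∈ 𝓕₀) ∧
    ∀ G ∈ 𝓕₀, ∀ x : ℝ, Integrable (fun y => V x y) G
  form : PredErrorForm V ∨ DiracSingletonForm V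

/-- The pair `(T^-(F), T^+(F))` of the interval-valued functional applied to the
random predictive distribution. -/
def TpairOf (V : ℝ → ℝ → ℝ) (F : Ω → Measure ℝ) (ω : Ω) : ℝ × ℝ :=
  (Tminus V (F ω), Tplus V (F ω))

/-- Conditional `T`-calibration of the predictive distribution `F`:
`T(L(Y | T(F))) = T(F)` almost surely. -/
def CondTCalibrated (μ : Measure Ω) [IsFiniteMeasure μ] (V : ℝ → ℝ → ℝ)
    (F : Ω → Measure ℝ) (Y : Ω → ℝ) : Prop :=
  ∀ᵐ ω ∂μ,
    Tminus V (condDistrib Y (TpairOf V F) μ (TpairOf V F ω)) = Tminus V (F ω) ∧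
    Tplus V (condDistrib Y (TpairOf V F) μ (TpairOf V F ω)) = Tplus V (F ω)

/-- Unconditional `T`-calibration of the predictive distribution `F`. -/
def UncondTCalibrated (μ : Measure Ω) (V : ℝ → ℝ → ℝ)
    (F : Ω → Measure ℝ) (Y : Ω → ℝ) : Prop :=
  ∀ ε : ℝ, 0 < ε →
    (∫ ω, V (Tplus V (F ω) - ε) (Y ω) ∂μ) ≤ 0 ∧
    0 ≤ ∫ ω, V (Tminus V (F ω) + ε) (Y ω) ∂μ

/-- Unconditional `T`-calibration of a single-valued point forecast `X`. -/
def UncondCalibratedPt (μ : Measure Ω) (V : ℝ → ℝ → ℝ) (X Y : Ω → ℝ) : Prop :=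
  ∀ ε : ℝ, 0 < ε →
    (∫ ω, V (X ω - ε) (Y ω) ∂μ) ≤ 0 ∧ 0 ≤ ∫ ω, V (X ω + ε) (Y ω) ∂μ

/-- The sets defining `T^-(G)` and `T^+(G)` are nonempty and bounded, so that the induced
functional is well defined and finite at `G`. -/
def TWellDefined (V : ℝ → ℝ → ℝ) (G : Measure ℝ) : Prop :=
  {x : ℝ | ∫ y, V x y ∂G < 0}.Nonempty ∧ BddAbove {x : ℝ | ∫ y, V x y ∂G < 0} ∧
  {x : ℝ | 0 < ∫ y, V x y ∂G}.Nonempty ∧ BddBelow {x : ℝ | 0 < ∫ y, V x y ∂G}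

/-- The elementary loss `S_η(x,y) = (1{η ≤ x} − 1{η ≤ y}) V(η,y)`. -/
def elemLoss (V : ℝ → ℝ → ℝ) (η x y : ℝ) : ℝ :=
  ((if η ≤ x then (1:ℝ) else 0) - if η ≤ y then (1:ℝ) else 0) * V η y

/-- `S` has mixture (Choquet) form with respect to the identification function `V`. -/
def MixtureForm (V S : ℝ → ℝ → ℝ) : Prop :=
  ∃ H : Measure ℝ, IsLocallyFiniteMeasure H ∧
    ∀ x y : ℝ, S x y = ∫ η, elemLoss V η x y ∂H

/-- `S` is a canonical loss for the functional induced by `V`. -/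
def IsCanonicalLoss (V S : ℝ → ℝ → ℝ) : Prop :=
  (∀ x y : ℝ, 0 ≤ S x y) ∧
  ∃ a : ℝ, 0 < a ∧ ∃ b : ℝ → ℝ, Measurable b ∧
    ∀ x y : ℝ, S x y = a * (∫ η, elemLoss V η x y) + b y

/-- `S` is a consistent scoring function for the functional induced by `V` on the class `𝓕`. -/
def ConsistentFor (S V : ℝ → ℝ → ℝ) (𝓕 : Set (Measure ℝ)) : Prop :=
  ∀ G ∈ 𝓕, ∀ t ∈ Set.Icc (Tminus V G) (Tplus V G), ∀ x : ℝ,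
    ∫ y, S t y ∂G ≤ ∫ y, S x y ∂G

/-- `S` is a strictly consistent scoring function for the functional induced by `V` on `𝓕`. -/
def StrictlyConsistentFor (S V : ℝ → ℝ → ℝ) (𝓕 : Set (Measure ℝ)) : Prop :=
  ConsistentFor S V 𝓕 ∧
  ∀ G ∈ 𝓕, ∀ t ∈ Set.Icc (Tminus V G) (Tplus V G), ∀ x : ℝ,
    x ∉ Set.Icc (Tminus V G) (Tplus V G) → ∫ y, S t y ∂G < ∫ y, S x y ∂G

/-- The empirical distribution of the outcomes `y i`, `i ∈ s`. -/
def empOn {n : ℕ} (y : Fin n → ℝ) (s : Finset (Fin n)) : Measure ℝ :=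
  (s.card : ENNReal)⁻¹ • ∑ i ∈ s, Measure.dirac (y i)

/-- A locally bounded real function of a real variable. -/
def LocallyBdd (f : ℝ → ℝ) : Prop :=
  ∀ η₀ : ℝ, ∃ ε : ℝ, 0 < ε ∧ ∃ C : ℝ, ∀ η : ℝ, |η - η₀| < ε → |f η| ≤ C

/-- All CDFs in the class `𝓕` are continuous and strictly increasing on a shared
support interval. -/
def CSI (𝓕 : Set (Measure ℝ)) : Prop :=
  ∃ S : Set ℝ, S.Nonempty ∧ S.OrdConnected ∧ ∀ G ∈ 𝓕,
    Continuous (cdfAt G) ∧ StrictMonoOn (cdfAt G) S ∧ G Sᶜ = 0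

/-- The conditioning variable for quantile calibration at level `α`: the interval of
`α`-quantiles, represented by its endpoints. -/
def qPairOf (F : Ω → Measure ℝ) (α : ℝ) (ω : Ω) : ℝ × ℝ :=
  (lowerQuantile (F ω) α, upperQuantile (F ω) α)

/-- `F` is quantile calibrated: for every `α ∈ (0,1)`,
`q_α(L(Y | q_α(F))) = q_α(F)` almost surely. -/
def QuantileCalibrated (μ : Measure Ω) [IsFiniteMeasure μ]
    (F : Ω → Measure ℝ) (Y : Ω → ℝ) : Prop :=
  ∀ α ∈ Set.Ioo (0:ℝ) 1, ∀ᵐ ω ∂μ,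
    lowerQuantile (condDistrib Y (qPairOf F α) μ (qPairOf F α ω)) α
      = lowerQuantile (F ω) α ∧
    upperQuantile (condDistrib Y (qPairOf F α) μ (qPairOf F α ω)) α
      = upperQuantile (F ω) α

/-!
Auto-calibration says that, given `F`, the outcome `Y` has law `F`: the joint law of `(F, Y)` is
the law of `F` composed with the kernel `G ↦ G`. Marginal calibration is then the tower property.
For probabilistic calibration, the independence of `U` reduces `Q(Z_F ≤ α)` to an average over `G`
of the same probability for a fixed forecast `G` and `Y ∼ G`. If `c` is where the cdf of `G`
crosses the level `α`, this event is `{Y < c}`, of mass `G(c−)`, together with the fraction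
`(α − G(c−)) / (G(c) − G(c−))` of the atom at `c`, so its probability is `α`.
-/

open Set Filter Topology
open Function (leftLim)

instance : IsProbabilityMeasure unif01 :=
  ⟨by simp [unif01, Real.volume_Icc]⟩

lemma unif01_apply (s : Set ℝ) : unif01 s = volume (s ∩ Icc 0 1) :=
  Measure.restrict_apply' measurableSet_Icc

lemma unif01_Iic {r : ℝ} (h1 : r ≤ 1) : unif01 (Iic r) = ENNReal.ofReal r := by
  have : Iic r ∩ Icc 0 1 = Icc 0 r := by
    ext u
    simp only [mem_inter_iff, mem_Iic, mem_Icc]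
    grind
  rw [unif01_apply, this, Real.volume_Icc, sub_zero]

lemma cdf_eq_max_min_of_measure_Iic (ν : Measure ℝ) [IsProbabilityMeasure ν]
    (hν : ∀ t ∈ Ioo (0:ℝ) 1, ν (Iic t) = ENNReal.ofReal t) (x : ℝ) :
    cdf ν x = max 0 (min x 1) := by
  have h : ∀ t ∈ Ioo (0:ℝ) 1, cdf ν t = t := fun t ht => by
    rw [← ENNReal.ofReal_eq_ofReal_iff (cdf_nonneg ν t) ht.1.le, ofReal_cdf, hν t ht]
  have hmid : ∀ x ∈ Ico (0:ℝ) 1, cdf ν x = x := by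
    rintro x ⟨hx0, hx1⟩
    refine tendsto_nhds_unique_of_eventuallyEq
      (((cdf ν).right_continuous x).mono Ioi_subset_Ici_self).tendsto
      (tendsto_id.mono_left nhdsWithin_le_nhds) ?_
    filter_upwards [Ioo_mem_nhdsGT hx1] with t ht
    exact h t ⟨hx0.trans_lt ht.1, ht.2⟩
  rcases lt_or_ge x 0 with hx0 | hx0
  · rw [max_eq_left (min_le_of_left_le hx0.le)]
    refine le_antisymm ?_ (cdf_nonneg ν x)
    simpa [hmid 0 (by simp)] using monotone_cdf ν hx0.le
  rcases lt_or_ge x 1 with hx1 | hx1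
  · rw [hmid x ⟨hx0, hx1⟩, min_eq_left hx1.le, max_eq_right hx0]
  · rw [min_eq_right hx1, max_eq_right zero_le_one]
    refine le_antisymm (cdf_le_one ν x) (le_of_forall_lt_imp_le_of_dense fun t ht => ?_)
    rcases le_or_gt t 0 with ht0 | ht0
    · exact ht0.trans (cdf_nonneg ν x)
    · exact (h t ⟨ht0, ht⟩).symm.le.trans (monotone_cdf ν (ht.le.trans hx1))

lemma eq_unif01_of_measure_Iic (ν : Measure ℝ) [IsProbabilityMeasure ν]
    (h : ∀ t ∈ Ioo (0:ℝ) 1, ν (Iic t) = ENNReal.ofReal t) : ν = unif01 :=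
  Measure.eq_of_cdf _ _ <| StieltjesFunction.ext fun x => by
    rw [cdf_eq_max_min_of_measure_Iic ν h,
      cdf_eq_max_min_of_measure_Iic unif01 fun t ht => unif01_Iic ht.2.le]

section AffineLevelSet

variable {a b α : ℝ}

lemma unif01_affine_le_eq_one (hab : a ≤ b) (hb : b ≤ α) :
    unif01 {u | a + u * (b - a) ≤ α} = 1 := by
  rw [unif01_apply, inter_eq_right.mpr fun u hu => ?_, Real.volume_Icc, sub_zero,
    ENNReal.ofReal_one]
  have : u * (b - a) ≤ 1 * (b - a) := mul_le_mul_of_nonneg_right hu.2 (sub_nonneg.mpr hab)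
  simp only [mem_ofPred_eq]
  linarith

lemma unif01_affine_le_eq_zero (hab : a ≤ b) (ha : α < a) :
    unif01 {u | a + u * (b - a) ≤ α} = 0 := by
  rw [unif01_apply, ← measure_empty (μ := (volume : Measure ℝ))]
  congr 1
  refine eq_empty_of_forall_notMem fun u ⟨hu, hu01⟩ => ?_
  have : 0 ≤ u * (b - a) := mul_nonneg hu01.1 (sub_nonneg.mpr hab)
  simp only [mem_ofPred_eq] at hu
  linarith

lemma ofReal_add_unif01_affine_le_mul (ha0 : 0 ≤ a) (ha : a ≤ α) (hb : α ≤ b) :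
    ENNReal.ofReal a + unif01 {u | a + u * (b - a) ≤ α} * ENNReal.ofReal (b - a)
      = ENNReal.ofReal α := by
  rcases (ha.trans hb).eq_or_lt with rfl | hab
  · rw [le_antisymm ha hb, sub_self, ENNReal.ofReal_zero, mul_zero, add_zero]
  have hba : 0 < b - a := sub_pos.mpr hab
  have hset : {u | a + u * (b - a) ≤ α} = Iic ((α - a) / (b - a)) := by
    ext u
    rw [mem_ofPred_eq, mem_Iic, le_div_iff₀ hba]
    constructor <;> intro h <;> linarith
  rw [hset, unif01_Iic ((div_le_one hba).mpr (by linarith)),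
    ← ENNReal.ofReal_mul (div_nonneg (by linarith) hba.le), div_mul_cancel₀ _ hba.ne',
    ← ENNReal.ofReal_add ha0 (by linarith), add_sub_cancel]

end AffineLevelSet

lemma StieltjesFunction.exists_level_crossing (f : StieltjesFunction ℝ)
    (hbot : Tendsto f atBot (𝓝 0)) (htop : Tendsto f atTop (𝓝 1)) {α : ℝ} (hα : α ∈ Ioo 0 1) :
    ∃ c, leftLim f c ≤ α ∧ α ≤ f c ∧ (∀ y < c, f y ≤ α) ∧ ∀ y, c < y → α < leftLim f y := by
  set S : Set ℝ := {y | α < f y}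
  have hne : S.Nonempty := (htop.eventually (lt_mem_nhds hα.2)).exists
  obtain ⟨m, hm⟩ := eventually_atBot.mp (hbot.eventually (gt_mem_nhds hα.1))
  have hbdd : BddBelow S := ⟨m, fun z hz => le_of_not_gt fun hzm => (hm z hzm.le).not_gt hz⟩
  have below : ∀ y < sInf S, f y ≤ α := fun y hy =>
    not_lt.mp fun hyS => notMem_of_lt_csInf (s := S) hy hbdd hyS
  have above : ∀ y, sInf S < y → α < leftLim f y := fun y hy => by
    obtain ⟨z, hzS, hzy⟩ := exists_lt_of_csInf_lt hne hy
    exact hzS.trans_le (f.mono.le_leftLim hzy)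
  refine ⟨sInf S, ?_, ?_, below, above⟩
  · exact le_of_tendsto (f.mono.tendsto_leftLim _) (eventually_nhdsWithin_of_forall below)
  · exact ge_of_tendsto ((f.right_continuous _).mono Ioi_subset_Ici_self)
      (eventually_nhdsWithin_of_forall fun y hy =>
        ((above y hy).trans_le (f.mono.leftLim_le le_rfl)).le)

lemma leftLim_cdf_nonneg (G : Measure ℝ) (y : ℝ) : 0 ≤ leftLim (cdf G) y :=
  (cdf_nonneg G (y - 1)).trans ((cdf G).mono.le_leftLim (sub_one_lt y))

def randPIT (G : Measure ℝ) (y u : ℝ) : ℝ := cdfLt G y + u * (cdfAt G y - cdfLt G y)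

section FixedForecast

variable (G : Measure ℝ) [IsProbabilityMeasure G]

lemma cdfAt_eq_cdf : cdfAt G = cdf G :=
  funext fun y => (cdf_eq_real G y).symm

lemma measure_Iio_eq_ofReal_leftLim_cdf (y : ℝ) :
    G (Iio y) = ENNReal.ofReal (leftLim (cdf G) y) := by
  simpa [measure_cdf] using (cdf G).measure_Iio (tendsto_cdf_atBot G) y

lemma cdfLt_eq_leftLim_cdf : cdfLt G = leftLim (cdf G) :=
  funext fun y => by
    rw [cdfLt, measure_Iio_eq_ofReal_leftLim_cdf, ENNReal.toReal_ofReal (leftLim_cdf_nonneg G y)]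

lemma lintegral_unif01_randPIT_le {α : ℝ} (hα : α ∈ Ioo 0 1) :
    ∫⁻ y, unif01 {u | randPIT G y u ≤ α} ∂G = ENNReal.ofReal α := by
  obtain ⟨c, hca, hcb, below, above⟩ :=
    (cdf G).exists_level_crossing (tendsto_cdf_atBot G) (tendsto_cdf_atTop G) hα
  simp only [randPIT, cdfAt_eq_cdf, cdfLt_eq_leftLim_cdf]
  set a := leftLim (cdf G) c
  set b := cdf G c
  have hmono : ∀ y, leftLim (cdf G) y ≤ cdf G y := fun y => (cdf G).mono.leftLim_le le_rfl
  have hsplit : ∀ y, unif01 {u | leftLim (cdf G) y + u * (cdf G y - leftLim (cdf G) y) ≤ α}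
      = (Iio c).indicator 1 y
        + ({c} : Set ℝ).indicator (fun _ => unif01 {u | a + u * (b - a) ≤ α}) y := by
    intro y
    rcases lt_trichotomy y c with hy | rfl | hy
    · simp [hy, hy.ne, unif01_affine_le_eq_one (hmono y) (below y hy)]
    · simp [a, b]
    · simp [hy.not_gt, hy.ne', unif01_affine_le_eq_zero (hmono y) (above y hy)]
  have hsingleton : G {c} = ENNReal.ofReal (b - a) := by
    rw [← measure_cdf G, StieltjesFunction.measure_singleton]
  rw [lintegral_congr hsplit, lintegral_add_left (measurable_one.indicator measurableSet_Iio),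
    lintegral_indicator_one measurableSet_Iio,
    lintegral_indicator_const (measurableSet_singleton c), measure_Iio_eq_ofReal_leftLim_cdf,
    hsingleton]
  exact ofReal_add_unif01_affine_le_mul (leftLim_cdf_nonneg G c) hca hcb

end FixedForecast

/-- The identity `G ↦ G` is not an s-finite kernel on all of `Measure α`; rescaling to total
mass at most one makes it a finite kernel that is still the identity on probability measures. -/
def normalizedKernel (α : Type*) [MeasurableSpace α] : Kernel (Measure α) α where
  toFun G := (G univ)⁻¹ • G
  measurable' := Measure.measurable_of_measurable_coe _ fun _ hs =>
    (Measure.measurable_coe MeasurableSet.univ).inv.mul (Measure.measurable_coe hs)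

instance {α : Type*} [MeasurableSpace α] : IsFiniteKernel (normalizedKernel α) :=
  ⟨⟨1, ENNReal.one_lt_top, fun G => by simp [normalizedKernel, ENNReal.inv_mul_le_one]⟩⟩

lemma normalizedKernel_apply {α : Type*} [MeasurableSpace α] (G : Measure α)
    [IsProbabilityMeasure G] : normalizedKernel α G = G := by
  simp [normalizedKernel]

lemma measurable_randPIT_normalizedKernel :
    Measurable fun p : (Measure ℝ × ℝ) × ℝ => randPIT (normalizedKernel ℝ p.1.1) p.1.2 p.2 := by
  have hκ : ∀ {t : Set ((Measure ℝ × ℝ) × ℝ)}, MeasurableSet t →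
      Measurable fun p : Measure ℝ × ℝ => normalizedKernel ℝ p.1 (Prod.mk p ⁻¹' t) :=
    ((normalizedKernel ℝ).comap Prod.fst measurable_fst).measurable_kernel_prodMk_left
  have hIic : Measurable fun p : Measure ℝ × ℝ => cdfAt (normalizedKernel ℝ p.1) p.2 :=
    (hκ (measurableSet_le measurable_snd (measurable_snd.comp measurable_fst))).ennreal_toReal
  have hIio : Measurable fun p : Measure ℝ × ℝ => cdfLt (normalizedKernel ℝ p.1) p.2 :=
    (hκ (measurableSet_lt measurable_snd (measurable_snd.comp measurable_fst))).ennreal_toReal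
  exact (hIio.comp measurable_fst).add
    (measurable_snd.mul ((hIic.comp measurable_fst).sub (hIio.comp measurable_fst)))

lemma MeasureTheory.Measure.ext_of_Iic_rat {G H : Measure ℝ} [IsFiniteMeasure G]
    (h : ∀ q : ℚ, G (Iic (q : ℝ)) = H (Iic (q : ℝ))) (huniv : G univ = H univ) : G = H :=
  ext_of_generate_finite _ Real.borel_eq_generateFrom_Iic_rat Real.isPiSystem_Iic_rat
    (by simpa using h) huniv

section PredictionSpace

variable {Ω : Type*} [MeasurableSpace Ω] {μ : Measure Ω} {F : Ω → Measure ℝ} {Y U : Ω → ℝ}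

lemma margCalibrated_of_autoCalibrated [IsFiniteMeasure μ] (hF : Measurable F)
    (hY : Measurable Y) (hac : AutoCalibrated μ F Y) : MargCalibrated μ F Y := fun y => by
  rw [integral_congr_ae (hac y), integral_condExp hF.comap_le,
    integral_indicator_const _ (measurableSet_le hY measurable_const), smul_eq_mul, mul_one,
    measureReal_def]

lemma map_prodMk_eq_compProd_of_autoCalibrated (hps : IsPredictionSpace μ F Y U)
    (hac : AutoCalibrated μ F Y) :
    μ.map (fun ω => (F ω, Y ω)) = μ.map F ⊗ₘ normalizedKernel ℝ := by
  have := hps.isProb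
  rw [← condDistrib_ae_eq_iff_measure_eq_compProd F hps.measY.aemeasurable]
  have hq : ∀ q : ℚ, ∀ᵐ G ∂μ.map F,
      condDistrib Y F μ G (Iic (q : ℝ)) = normalizedKernel ℝ G (Iic (q : ℝ)) := by
    intro q
    rw [ae_map_iff hps.measF.aemeasurable (measurableSet_eq_fun
      (Kernel.measurable_coe _ measurableSet_Iic) (Kernel.measurable_coe _ measurableSet_Iic))]
    filter_upwards [condDistrib_ae_eq_condExp hps.measF hps.measY measurableSet_Iic, hac q]
      with ω hcond hcal
    have := hps.probF ω
    rw [normalizedKernel_apply, ← ENNReal.toReal_eq_toReal_iff' (measure_ne_top _ _)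
      (measure_ne_top _ _), ← measureReal_def, hcond]
    exact hcal.symm
  have huniv : ∀ᵐ G ∂μ.map F, normalizedKernel ℝ G univ = 1 := by
    rw [ae_map_iff hps.measF.aemeasurable
      (measurableSet_eq_fun (Kernel.measurable_coe _ MeasurableSet.univ) measurable_const)]
    refine ae_of_all _ fun ω => ?_
    have := hps.probF ω
    rw [normalizedKernel_apply, measure_univ]
  filter_upwards [ae_all_iff.mpr hq, huniv] with G hG hGuniv
  exact Measure.ext_of_Iic_rat hG (by rw [measure_univ, hGuniv])

lemma IsPredictionSpace.map_prodMk_eq_prod (hps : IsPredictionSpace μ F Y U) :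
    μ.map (fun ω => ((F ω, Y ω), U ω)) = (μ.map fun ω => (F ω, Y ω)).prod unif01 := by
  have := hps.isProb
  rw [← hps.unifU]
  refine (indepFun_iff_map_prod_eq_prod_map_map (hps.measF.prodMk hps.measY).aemeasurable
    hps.measU.aemeasurable).mp ?_
  rw [IndepFun_iff_Indep]
  convert hps.indepU.symm using 1
  exact MeasurableSpace.comap_prodMk F Y

lemma probCalibrated_of_map_prodMk_eq_compProd (hps : IsPredictionSpace μ F Y U)
    (hFY : μ.map (fun ω => (F ω, Y ω)) = μ.map F ⊗ₘ normalizedKernel ℝ) :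
    ProbCalibrated μ F Y U := by
  have := hps.isProb
  set Φ : (Measure ℝ × ℝ) × ℝ → ℝ := fun p => randPIT (normalizedKernel ℝ p.1.1) p.1.2 p.2
  have hΦ : Measurable Φ := measurable_randPIT_normalizedKernel
  have hFYU : Measurable fun ω => ((F ω, Y ω), U ω) :=
    (hps.measF.prodMk hps.measY).prodMk hps.measU
  have hPIT : PIT F Y U = Φ ∘ fun ω => ((F ω, Y ω), U ω) := funext fun ω => by
    have := hps.probF ω
    simp [Φ, PIT, randPIT, normalizedKernel_apply]
  have := Measure.isProbabilityMeasure_map (hPIT ▸ hΦ.comp hFYU).aemeasurable (μ := μ)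
  refine eq_unif01_of_measure_Iic _ fun α hα => ?_
  have hsection :=
    measurable_measure_prodMk_left (ν := unif01) (hΦ (measurableSet_Iic (a := α)))
  have hinner : Measurable fun G =>
      ∫⁻ y, unif01 {u | randPIT (normalizedKernel ℝ G) y u ≤ α} ∂normalizedKernel ℝ G :=
    hsection.lintegral_kernel_prod_right'
  calc μ.map (PIT F Y U) (Iic α)
      = (μ.map fun ω => ((F ω, Y ω), U ω)) (Φ ⁻¹' Iic α) := by
        rw [hPIT, ← Measure.map_map hΦ hFYU, Measure.map_apply hΦ measurableSet_Iic]
    _ = ∫⁻ G, ∫⁻ y, unif01 {u | randPIT (normalizedKernel ℝ G) y u ≤ α}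
          ∂normalizedKernel ℝ G ∂μ.map F := by
        rw [hps.map_prodMk_eq_prod, Measure.prod_apply (hΦ measurableSet_Iic), hFY,
          Measure.lintegral_compProd hsection]
        rfl
    _ = ∫⁻ ω, ∫⁻ y, unif01 {u | randPIT (F ω) y u ≤ α} ∂F ω ∂μ := by
        rw [lintegral_map hinner hps.measF]
        refine lintegral_congr fun ω => ?_
        have := hps.probF ω
        rw [normalizedKernel_apply]
    _ = ENNReal.ofReal α := by
        rw [lintegral_congr fun ω => have := hps.probF ω; lintegral_unif01_randPIT_le (F ω) hα,
          lintegral_const, measure_univ, mul_one]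

end PredictionSpace

/-- **Theorem (Statement 0).** In a prediction space, auto-calibration of the predictive
distribution `F` implies both marginal and probabilistic calibration. -/
theorem autoCalibrated_implies_marg_and_prob
    {Ω : Type*} [MeasurableSpace Ω] (μ : Measure Ω) (F : Ω → Measure ℝ) (Y U : Ω → ℝ)
    (hps : IsPredictionSpace μ F Y U) (hac : AutoCalibrated μ F Y) :
    MargCalibrated μ F Y ∧ ProbCalibrated μ F Y U :=
  have := hps.isProb
  ⟨margCalibrated_of_autoCalibrated hps.measF hps.measY hac,
    probCalibrated_of_map_prodMk_eq_compProd hps (map_prodMk_eq_compProd_of_autoCalibrated hps hac)⟩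

end
end

section
/- In a prediction space, CEP calibration of the predictive distribution F implies probabilistic calibration of F, and threshold calibration of F implies marginal calibration of F. -/
open MeasureTheory ProbabilityTheory

noncomputable section

variable {Ω : Type*} [MeasurableSpace Ω]

/-!
Conditioning preserves expectations: integrating `Q(Z_F ≤ α | q_α^-(F)) = α` gives
`Q(Z_F ≤ α) = α` for `α ∈ (0,1)`, and a distribution function that is the identity on `(0,1)`
is, by monotonicity and `0 ≤ · ≤ 1`, the uniform one. Integrating `Q(Y ≤ t | F(t)) = F(t)`
gives `E F(t) = Q(Y ≤ t)`.
-/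

open Set

instance inst_s1 : IsProbabilityMeasure unif01 :=
  ⟨by simp [unif01, Real.volume_Icc]⟩

lemma cdf_unif01 {α : ℝ} (hα : α ∈ Icc 0 1) : cdf unif01 α = α := by
  have hset : Iic α ∩ Icc 0 1 = Icc 0 α := by
    ext x
    simp only [mem_inter_iff, mem_Iic, mem_Icc]
    exact ⟨fun hx => ⟨hx.2.1, hx.1⟩, fun hx => ⟨hx.2, hx.1, hx.2.trans hα.2⟩⟩
  rw [cdf_eq_real, unif01, measureReal_restrict_apply measurableSet_Iic, hset,
    Real.volume_real_Icc_of_le hα.1, sub_zero]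

lemma cdf_eq_max_min_of_eqOn_Ioo (ν : Measure ℝ) [IsProbabilityMeasure ν]
    (h : EqOn (cdf ν) id (Ioo 0 1)) (a : ℝ) : cdf ν a = max 0 (min a 1) := by
  rcases le_or_gt a 0 with ha0 | ha0
  · refine (le_antisymm (le_of_forall_gt_imp_ge_of_dense fun c hc => ?_) (cdf_nonneg ν a)).trans
      (by simp [ha0])
    rcases lt_or_ge c 1 with hc1 | hc1
    · exact (monotone_cdf ν (ha0.trans hc.le)).trans_eq (h ⟨hc, hc1⟩)
    · exact (cdf_le_one ν a).trans hc1
  rcases lt_or_ge a 1 with ha1 | ha1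
  · rw [h ⟨ha0, ha1⟩, min_eq_left ha1.le, max_eq_right ha0.le, id]
  · refine (le_antisymm (cdf_le_one ν a) (le_of_forall_lt_imp_le_of_dense fun c hc => ?_)).trans
      (by simp [ha1])
    rcases le_or_gt c 0 with hc0 | hc0
    · exact hc0.trans (cdf_nonneg ν a)
    · exact (h ⟨hc0, hc⟩).symm.le.trans (monotone_cdf ν (hc.le.trans ha1))

lemma eq_unif01_of_cdf_eqOn_Ioo (ν : Measure ℝ) [IsProbabilityMeasure ν]
    (h : EqOn (cdf ν) id (Ioo 0 1)) : ν = unif01 := by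
  refine Measure.eq_of_cdf _ _ (StieltjesFunction.ext fun a => ?_)
  rw [cdf_eq_max_min_of_eqOn_Ioo ν h, cdf_eq_max_min_of_eqOn_Ioo unif01
    (fun α hα => cdf_unif01 (Ioo_subset_Icc_self hα))]

section CondExpIndicator

variable {X : Type*} {m m₀ : MeasurableSpace X} {μ : Measure X} {s : Set X}

lemma integral_eq_measureReal_of_condExp_indicator_ae_eq [IsFiniteMeasure μ]
    (hm : m ≤ m₀) (hs : MeasurableSet s) {g : X → ℝ}
    (h : μ[s.indicator (fun _ => (1 : ℝ)) | m] =ᵐ[μ] g) :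
    ∫ x, g x ∂μ = μ.real s := by
  rw [← integral_congr_ae h, integral_condExp hm]
  exact integral_indicator_one hs

/-- If `m` is not a sub-σ-algebra, the conditional expectation is `0` by convention, which
rules out a nonzero constant. -/
lemma measureReal_eq_of_condExp_indicator_ae_eq_const [IsProbabilityMeasure μ]
    (hs : MeasurableSet s) {c : ℝ} (hc : c ≠ 0)
    (h : μ[s.indicator (fun _ => (1 : ℝ)) | m] =ᵐ[μ] fun _ => c) :
    μ.real s = c := by
  by_cases hm : m ≤ m₀
  · simpa using (integral_eq_measureReal_of_condExp_indicator_ae_eq hm hs h).symm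
  · rw [condExp_of_not_le hm] at h
    obtain ⟨_, h0⟩ := h.exists
    exact absurd h0.symm hc

end CondExpIndicator

section PredictiveCDF

variable {F : Ω → Measure ℝ}

lemma measurable_cdfAt (hF : Measurable F) (y : ℝ) : Measurable fun ω => cdfAt (F ω) y :=
  ((Measure.measurable_coe measurableSet_Iic).comp hF).ennreal_toReal

variable (hF : Measurable F) (hFp : ∀ ω, IsProbabilityMeasure (F ω)) {Y : Ω → ℝ}
  (hY : Measurable Y)
include hF hFp hY

lemma measurable_cdfAt_comp : Measurable fun ω => cdfAt (F ω) (Y ω) := by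
  have : IsMarkovKernel (⟨F, hF⟩ : Kernel Ω ℝ) := ⟨hFp⟩
  exact (Kernel.measurable_kernel_prodMk_left (κ := ⟨F, hF⟩)
    (measurableSet_le measurable_snd (hY.comp measurable_fst))).ennreal_toReal

lemma measurable_cdfLt_comp : Measurable fun ω => cdfLt (F ω) (Y ω) := by
  have : IsMarkovKernel (⟨F, hF⟩ : Kernel Ω ℝ) := ⟨hFp⟩
  exact (Kernel.measurable_kernel_prodMk_left (κ := ⟨F, hF⟩)
    (measurableSet_lt measurable_snd (hY.comp measurable_fst))).ennreal_toReal

lemma measurable_PIT {U : Ω → ℝ} (hU : Measurable U) : Measurable (PIT F Y U) :=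
  (measurable_cdfLt_comp hF hFp hY).add
    (hU.mul ((measurable_cdfAt_comp hF hFp hY).sub (measurable_cdfLt_comp hF hFp hY)))

end PredictiveCDF

/-- **Theorem (Statement 1).** In a prediction space, CEP calibration implies probabilistic
calibration, and threshold calibration implies marginal calibration. -/
theorem cep_implies_prob_and_thresh_implies_marg
    {Ω : Type*} [MeasurableSpace Ω] (μ : Measure Ω) (F : Ω → Measure ℝ) (Y U : Ω → ℝ)
    (hps : IsPredictionSpace μ F Y U) :
    (CEPCalibrated μ F Y U → ProbCalibrated μ F Y U) ∧
    (ThreshCalibrated μ F Y → MargCalibrated μ F Y) := by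
  obtain ⟨_, hFp, hF, hY, hU, -, -⟩ := hps
  have hZ := measurable_PIT hF hFp hY hU
  refine ⟨fun hCEP => ?_, fun hThresh y => ?_⟩
  · have : IsProbabilityMeasure (μ.map (PIT F Y U)) :=
      Measure.isProbabilityMeasure_map hZ.aemeasurable
    refine eq_unif01_of_cdf_eqOn_Ioo _ fun α hα => ?_
    rw [cdf_eq_real, map_measureReal_apply hZ measurableSet_Iic]
    exact measureReal_eq_of_condExp_indicator_ae_eq_const
      (measurableSet_le hZ measurable_const) hα.1.ne' (hCEP α hα)
  · exact integral_eq_measureReal_of_condExp_indicator_ae_eq (measurable_cdfAt hF y).comap_le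
      (measurableSet_le hY measurable_const) (hThresh y)

end
end

section
/- Let X be a point forecast, T a single-valued functional with identification function V satisfying Assumptions (V) and (X), and S a canonical loss for T, such that E[S(X+η,Y)] and E[V(X+η,Y)] are well defined and locally bounded as functions of η ∈ ℝ. Then X is unconditionally T-calibrated if, and only if, E[S(X+c,Y)] ≥ E[S(X,Y)] for every c ∈ ℝ. -/
/-!
A canonical loss is `S(x, y) = a ∫_y^x V(η, y) dη + b(y)`, so translating the forecast by `c`
changes it by `a ∫_0^c V(x + u, y) du`. Taking expectations and exchanging the two integrals,
which is legitimate because on `[0, c]` the monotone integrand is squeezed between its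
(integrable) values at the endpoints, gives `E S(X + c, Y) - E S(X, Y) = a ∫_0^c g(u) du` with
`g(u) = E V(X + u, Y)` increasing. For an increasing `g`, every `∫_0^c g` is nonnegative exactly
when `g ≤ 0` on `(-∞, 0)` and `g ≥ 0` on `(0, ∞)`, which is unconditional calibration.
-/

open MeasureTheory ProbabilityTheory

noncomputable section

variable {Ω : Type*} [MeasurableSpace Ω]

open Set

lemma elemLoss_eq_indicator_sub_indicator (V : ℝ → ℝ → ℝ) (η x y : ℝ) :
    elemLoss V η x y = (Ioc y x).indicator (V · y) η - (Ioc x y).indicator (V · y) η := by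
  unfold elemLoss
  simp only [indicator_apply, mem_Ioc]
  split_ifs <;> grind

lemma integral_elemLoss (V : ℝ → ℝ → ℝ) (x y : ℝ) :
    ∫ η, elemLoss V η x y = ∫ η in y..x, V η y := by
  simp_rw [elemLoss_eq_indicator_sub_indicator]
  rcases le_total y x with h | h
  · simp only [Ioc_eq_empty_of_le h, indicator_empty, sub_zero]
    rw [integral_indicator measurableSet_Ioc, intervalIntegral.integral_of_le h]
  · simp only [Ioc_eq_empty_of_le h, indicator_empty, zero_sub]
    rw [integral_neg, integral_indicator measurableSet_Ioc, intervalIntegral.integral_of_ge h]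

lemma sub_eq_mul_intervalIntegral_of_canonical {V S : ℝ → ℝ → ℝ}
    (hV : ∀ y, Monotone fun x => V x y) {a : ℝ} {b : ℝ → ℝ}
    (hS : ∀ x y, S x y = a * (∫ η, elemLoss V η x y) + b y) (x y c : ℝ) :
    S (x + c) y - S x y = a * ∫ u in (0:ℝ)..c, V (x + u) y := by
  have hint : ∀ p q : ℝ, IntervalIntegrable (V · y) volume p q :=
    fun p q => (hV y).intervalIntegrable
  rw [hS, hS, integral_elemLoss, integral_elemLoss,
    intervalIntegral.integral_comp_add_left (V · y) x, add_zero,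
    ← intervalIntegral.integral_interval_sub_left (hint y (x + c)) (hint y x)]
  ring

lemma integrable_uncurry_of_monotone {μ : Measure Ω} [SFinite μ] {f : ℝ → Ω → ℝ}
    (hf : Measurable (Function.uncurry f)) (hmono : ∀ ω, Monotone (f · ω))
    (hint : ∀ u, Integrable (f u) μ) (p q : ℝ) :
    Integrable (Function.uncurry f) ((volume.restrict (uIoc p q)).prod μ) := by
  have : IsFiniteMeasure (volume.restrict (uIoc p q)) := Real.isFiniteMeasure_restrict_Ioc _ _
  have hbound : Integrable (fun z : ℝ × Ω => |f (min p q) z.2| + |f (max p q) z.2|)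
      ((volume.restrict (uIoc p q)).prod μ) :=
    ((hint _).abs.add (hint _).abs).comp_snd _
  refine hbound.mono' hf.aestronglyMeasurable ?_
  have hmem : ∀ᵐ z ∂(volume.restrict (uIoc p q)).prod μ, z.1 ∈ uIoc p q :=
    Measure.QuasiMeasurePreserving.ae Measure.quasiMeasurePreserving_fst
      (ae_restrict_mem measurableSet_uIoc)
  filter_upwards [hmem] with ⟨u, ω⟩ hu
  have hlo : f (min p q) ω ≤ f u ω := hmono ω (uIoc_subset_uIcc hu).1
  have hhi : f u ω ≤ f (max p q) ω := hmono ω (uIoc_subset_uIcc hu).2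
  rw [Function.uncurry_apply_pair, Real.norm_eq_abs, abs_le]
  constructor <;> linarith [neg_abs_le (f (min p q) ω), le_abs_self (f (max p q) ω),
    abs_nonneg (f (min p q) ω), abs_nonneg (f (max p q) ω)]

lemma integral_shift_sub_eq_mul_intervalIntegral {μ : Measure Ω} [SFinite μ] {X Y : Ω → ℝ}
    (hX : Measurable X) (hY : Measurable Y) {V S : ℝ → ℝ → ℝ} (hV : IsIdentificationFunction V)
    {a : ℝ} {b : ℝ → ℝ} (hS : ∀ x y, S x y = a * (∫ η, elemLoss V η x y) + b y)
    (hSint : ∀ η, Integrable (fun ω => S (X ω + η) (Y ω)) μ)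
    (hVint : ∀ η, Integrable (fun ω => V (X ω + η) (Y ω)) μ) (c : ℝ) :
    ∫ ω, S (X ω + c) (Y ω) ∂μ - ∫ ω, S (X ω) (Y ω) ∂μ
      = a * ∫ u in (0:ℝ)..c, ∫ ω, V (X ω + u) (Y ω) ∂μ := by
  have hmeas : Measurable (Function.uncurry fun u ω => V (X ω + u) (Y ω)) :=
    hV.meas.comp (((hX.comp measurable_snd).add measurable_fst).prodMk (hY.comp measurable_snd))
  have hmono : ∀ ω, Monotone fun u => V (X ω + u) (Y ω) :=
    fun ω u v huv => hV.mono (Y ω) (by linarith)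
  have hSint₀ : Integrable (fun ω => S (X ω) (Y ω)) μ := by simpa using hSint 0
  rw [← integral_sub (hSint c) hSint₀]
  simp_rw [sub_eq_mul_intervalIntegral_of_canonical hV.mono hS]
  rw [integral_const_mul,
    intervalIntegral_integral_swap (integrable_uncurry_of_monotone hmeas hmono hVint 0 c)]

lemma Monotone.forall_intervalIntegral_nonneg_iff {g : ℝ → ℝ} (hg : Monotone g) :
    (∀ c, 0 ≤ ∫ u in (0:ℝ)..c, g u) ↔ ∀ ε > 0, g (-ε) ≤ 0 ∧ 0 ≤ g ε := by
  constructor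
  · intro h ε hε
    have hle : ∫ u in (0:ℝ)..ε, g u ≤ ε * g ε := by
      simpa using intervalIntegral.integral_mono_on (μ := volume) (g := fun _ => g ε) hε.le
        hg.intervalIntegrable intervalIntegrable_const fun u hu => hg hu.2
    have hge : ε * g (-ε) ≤ ∫ u in (-ε)..0, g u := by
      simpa using intervalIntegral.integral_mono_on (μ := volume) (f := fun _ => g (-ε))
        (a := -ε) (b := 0) (by linarith) intervalIntegrable_const hg.intervalIntegrable
        fun u hu => hg hu.1
    have hpos := h ε
    have hneg := h (-ε)
    rw [intervalIntegral.integral_symm] at hneg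
    constructor <;> nlinarith
  · intro h c
    rcases le_total 0 c with hc | hc
    · rw [intervalIntegral.integral_of_le hc]
      exact setIntegral_nonneg measurableSet_Ioc fun u hu => (h u hu.1).2
    · -- `g 0` may be positive, so integrate over the open interval
      rw [intervalIntegral.integral_of_ge hc, integral_Ioc_eq_integral_Ioo, neg_nonneg]
      refine setIntegral_nonpos measurableSet_Ioo fun u hu => ?_
      simpa using (h (-u) (neg_pos.2 hu.2)).1

theorem uncond_calibration_iff_translation_optimal_general
    {Ω : Type*} [MeasurableSpace Ω] (μ : Measure Ω) [IsProbabilityMeasure μ]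
    (X Y : Ω → ℝ) (hX : Measurable X) (hY : Measurable Y)
    (V : ℝ → ℝ → ℝ) (hV : IsIdentificationFunction V)
    (S : ℝ → ℝ → ℝ) (hS : IsCanonicalLoss V S)
    -- E[S(X+η,Y)] and E[V(X+η,Y)] are well defined and locally bounded in η:
    (hSint : ∀ η : ℝ, Integrable (fun ω => S (X ω + η) (Y ω)) μ)
    (hVint : ∀ η : ℝ, Integrable (fun ω => V (X ω + η) (Y ω)) μ) :
    UncondCalibratedPt μ V X Y ↔
      ∀ c : ℝ, ∫ ω, S (X ω) (Y ω) ∂μ ≤ ∫ ω, S (X ω + c) (Y ω) ∂μ := by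
  obtain ⟨-, a, ha, b, -, hS⟩ := hS
  have hg : Monotone fun u => ∫ ω, V (X ω + u) (Y ω) ∂μ := fun u v huv =>
    integral_mono (hVint u) (hVint v) fun ω => hV.mono (Y ω) (by linarith)
  simp only [UncondCalibratedPt, sub_eq_add_neg]
  rw [← hg.forall_intervalIntegral_nonneg_iff]
  refine forall_congr' fun c => ?_
  rw [← mul_nonneg_iff_of_pos_left ha,
    ← integral_shift_sub_eq_mul_intervalIntegral hX hY hV hS hSint hVint, sub_nonneg]

/-- **Theorem (Statement 9).** Under a canonical loss `S` for the functional `T`, the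
point forecast `X` is unconditionally `T`-calibrated if, and only if, the expected
canonical loss deteriorates under translation. -/
theorem uncond_calibration_iff_translation_optimal
    {Ω : Type*} [MeasurableSpace Ω] (μ : Measure Ω) [IsProbabilityMeasure μ]
    (X Y : Ω → ℝ) (hX : Measurable X) (hY : Measurable Y)
    (V : ℝ → ℝ → ℝ) (hV : IsIdentificationFunction V)
    (𝓕 : Set (Measure ℝ)) (hAV : AssumptionV V 𝓕)
    (T : Measure ℝ → ℝ) (hT : T = Tminus V ∨ T = Tplus V)
    -- Assumption (X): the recalibrated forecast is well defined and finite a.s.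
    (hwd : ∀ᵐ ω ∂μ, TWellDefined V (condDistrib Y X μ (X ω)))
    (S : ℝ → ℝ → ℝ) (hS : IsCanonicalLoss V S)
    -- E[S(X+η,Y)] and E[V(X+η,Y)] are well defined and locally bounded in η:
    (hSint : ∀ η : ℝ, Integrable (fun ω => S (X ω + η) (Y ω)) μ)
    (hVint : ∀ η : ℝ, Integrable (fun ω => V (X ω + η) (Y ω)) μ)
    (hSbdd : LocallyBdd (fun η => ∫ ω, S (X ω + η) (Y ω) ∂μ))
    (hVbdd : LocallyBdd (fun η => ∫ ω, V (X ω + η) (Y ω) ∂μ)) :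
    UncondCalibratedPt μ V X Y ↔
      ∀ c : ℝ, ∫ ω, S (X ω) (Y ω) ∂μ ≤ ∫ ω, S (X ω + c) (Y ω) ∂μ :=
  uncond_calibration_iff_translation_optimal_general μ X Y hX hY V hV S hS hSint hVint

end
end
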